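/- (Integrability of the σ* integrand.) In the block-diagonal Jordan setting, for every bounded continuous g : [0,∞) → ℂⁿ, the function τ ↦ (p/τ) B̃(−τ) π_u g(τ) is Bochner integrable on (0,∞), and there exists a constant K > 0, depending only on p and A, such that ‖∫_0^∞ (p/τ) B̃(−τ) π_u g(τ) dτ‖ ≤ K ‖g‖_∞. -/

import Mathlib

open MeasureTheory Filter

noncomputable def mlE (p β : ℝ) (z : ℂ) : ℂ :=
  ∑' k : ℕ, z ^ k / Complex.Gamma ((p * k + β : ℝ) : ℂ)

noncomputable def mlER (p β x : ℝ) : ℝ :=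
  ∑' k : ℕ, x ^ k / Real.Gamma (p * k + β)

noncomputable def psi (p : ℝ) (m : ℕ) (t : ℝ) (lam : ℂ) : ℂ :=
  (1 / (m.factorial : ℂ)) *
    iteratedDeriv m (fun z : ℂ => (1 / (p : ℂ)) * Complex.exp ((t : ℂ) * z ^ (1 / (p : ℂ)))) lam

noncomputable def psiT (p : ℝ) (m : ℕ) (t : ℝ) (lam : ℂ) : ℂ :=
  (1 / (m.factorial : ℂ)) *
    iteratedDeriv (m + 1) (fun z : ℂ => Complex.exp ((t : ℂ) * z ^ (1 / (p : ℂ)))) lam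

noncomputable def mlEM {ι : Type*} [Fintype ι] [DecidableEq ι] (p β : ℝ) (M : Matrix ι ι ℂ) :
    Matrix ι ι ℂ :=
  ∑' k : ℕ, (Complex.Gamma ((p * k + β : ℝ) : ℂ))⁻¹ • M ^ k

def jordanBlock (n : ℕ) (lam : ℂ) : Matrix (Fin n) (Fin n) ℂ :=
  Matrix.of fun i j => if i = j then lam else if (i : ℕ) + 1 = (j : ℕ) then 1 else 0

noncomputable def BMat (p : ℝ) (n : ℕ) (t : ℝ) (lam : ℂ) : Matrix (Fin n) (Fin n) ℂ :=
  Matrix.of fun i j => if (i : ℕ) ≤ (j : ℕ) then psi p ((j : ℕ) - (i : ℕ)) t lam else 0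

noncomputable def BTMat (p : ℝ) (n : ℕ) (t : ℝ) (lam : ℂ) : Matrix (Fin n) (Fin n) ℂ :=
  Matrix.of fun i j => if (i : ℕ) ≤ (j : ℕ) then psiT p ((j : ℕ) - (i : ℕ)) t lam else 0

noncomputable def opNorm {ι : Type*} [Fintype ι] [DecidableEq ι] (M : Matrix ι ι ℂ) : ℝ :=
  ‖LinearMap.toContinuousLinearMap (Matrix.toEuclideanLin M)‖

noncomputable def mvE {ι : Type*} [Fintype ι] [DecidableEq ι] (M : Matrix ι ι ℂ)
    (v : EuclideanSpace ℂ ι) : EuclideanSpace ℂ ι :=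
  Matrix.toEuclideanLin M v

def BC {E : Type*} [NormedAddCommGroup E] (x : ℝ → E) : Prop :=
  ContinuousOn x (Set.Ici 0) ∧ ∃ C, ∀ t : ℝ, 0 ≤ t → ‖x t‖ ≤ C

noncomputable def supNorm {E : Type*} [NormedAddCommGroup E] (x : ℝ → E) : ℝ :=
  ⨆ t : Set.Ici (0 : ℝ), ‖x (t : ℝ)‖

structure JordanSetting where
  p : ℝ
  hp0 : 0 < p
  hp1 : p < 1
  l : ℕ
  s : ℕ
  hsl : s ≤ l
  nsz : Fin l → ℕ
  hnsz : ∀ j, 1 ≤ nsz j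
  eig : Fin l → ℂ
  heig : ∀ j, eig j ≠ 0
  hstable : ∀ j : Fin l, (j : ℕ) < s → p * Real.pi / 2 < |Complex.arg (eig j)|
  hunstable : ∀ j : Fin l, s ≤ (j : ℕ) → |Complex.arg (eig j)| < p * Real.pi / 2

abbrev JordanSetting.ix (S : JordanSetting) : Type := Σ j : Fin S.l, Fin (S.nsz j)

abbrev ES (S : JordanSetting) : Type := EuclideanSpace ℂ S.ix

noncomputable def JordanSetting.A (S : JordanSetting) : Matrix S.ix S.ix ℂ :=
  Matrix.blockDiagonal' fun j => jordanBlock (S.nsz j) (S.eig j)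

noncomputable def JordanSetting.B (S : JordanSetting) (t : ℝ) : Matrix S.ix S.ix ℂ :=
  Matrix.blockDiagonal' fun j =>
    if (j : ℕ) < S.s then 0 else BMat S.p (S.nsz j) t (S.eig j)

noncomputable def JordanSetting.Bt (S : JordanSetting) (t : ℝ) : Matrix S.ix S.ix ℂ :=
  Matrix.blockDiagonal' fun j =>
    if (j : ℕ) < S.s then 0 else BTMat S.p (S.nsz j) t (S.eig j)

noncomputable def JordanSetting.piu (S : JordanSetting) (v : ES S) : ES S :=
  (WithLp.equiv 2 (S.ix → ℂ)).symm fun i =>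
    if S.s ≤ (i.1 : ℕ) then (WithLp.equiv 2 (S.ix → ℂ)) v i else 0

noncomputable def JordanSetting.pis (S : JordanSetting) (v : ES S) : ES S :=
  (WithLp.equiv 2 (S.ix → ℂ)).symm fun i =>
    if (i.1 : ℕ) < S.s then (WithLp.equiv 2 (S.ix → ℂ)) v i else 0

noncomputable def JordanSetting.EP (S : JordanSetting) (t : ℝ) : Matrix S.ix S.ix ℂ :=
  mlEM S.p 1 (((t ^ S.p : ℝ) : ℂ) • S.A)

noncomputable def JordanSetting.EPP (S : JordanSetting) (t : ℝ) : Matrix S.ix S.ix ℂ :=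
  mlEM S.p S.p (((t ^ S.p : ℝ) : ℂ) • S.A)

noncomputable def JordanSetting.T (S : JordanSetting) (f : ES S → ES S) (σ : ES S)
    (x : ℝ → ES S) (t : ℝ) : ES S :=
  mvE (S.EP t) σ
    + mvE (S.EP t) (∫ τ in Set.Ioi (0 : ℝ), (S.p / τ) • mvE (S.Bt (-τ)) (S.piu (f (x τ))))
    + ∫ τ in Set.Ioc (0 : ℝ) t, ((t - τ) ^ (S.p - 1)) • mvE (S.EPP (t - τ)) (f (x τ))

/-! On an unstable block the entries of `B̃(-τ)` are `ψ̃_m(-τ, λ) = (1/m!) ∂^{m+1} exp(-τ z^{1/p})`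
at `z = λ`. Because `|arg λ| < pπ/2`, on a small closed disc around `λ` the function `z^{1/p}` is
holomorphic with `Re z^{1/p} ≥ c > 0`, so Cauchy's estimate bounds `ψ̃_m(-τ, λ)` by a multiple of
`e^{-cτ}`. Applied to `exp(-τ z^{1/p}) - exp(-τ' z^{1/p})` it shows that `τ ↦ ψ̃_m(-τ, λ)` is
Lipschitz, and it vanishes at `τ = 0` (there the function is constant and `m + 1 ≥ 1`). Together,
`|ψ̃_m(-τ, λ)| ≤ C τ e^{-cτ}`, so `(p/τ) ‖B̃(-τ)‖` is integrable on `(0, ∞)` and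
`K = p ∑_{a,b} ∫₀^∞ |B̃(-τ)_{ab}| / τ dτ + 1` works. -/

open Metric Set Topology

lemma le_mul_mul_exp_of_le_of_le {x A L c τ : ℝ} (hA : 0 ≤ A) (hL : 0 ≤ L) (hc : 0 ≤ c)
    (hτ : 0 ≤ τ) (hexp : x ≤ A * Real.exp (-(c * τ))) (hlin : x ≤ L * τ) :
    x ≤ (L * Real.exp c + A) * τ * Real.exp (-(c * τ)) := by
  have he := Real.exp_pos (-(c * τ))
  rcases le_total τ 1 with hτ1 | hτ1
  · have : 1 ≤ Real.exp c * Real.exp (-(c * τ)) := by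
      rw [← Real.exp_add]
      exact Real.one_le_exp (by nlinarith)
    nlinarith [mul_nonneg hL hτ, mul_nonneg (mul_nonneg hA hτ) he.le]
  · nlinarith [mul_nonneg (mul_nonneg (mul_nonneg hL (Real.exp_pos c).le) hτ) he.le,
      mul_nonneg hA he.le]

namespace Complex

lemma norm_exp_sub_one_le_of_re_nonpos {z : ℂ} (hz : z.re ≤ 0) : ‖exp z - 1‖ ≤ 2 * ‖z‖ := by
  rcases le_total ‖z‖ 1 with h | h
  · exact norm_exp_sub_one_le h
  · calc ‖exp z - 1‖ ≤ ‖exp z‖ + ‖(1 : ℂ)‖ := norm_sub_le _ _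
      _ ≤ 1 + 1 := by
        rw [norm_exp, norm_one]
        gcongr
        exact Real.exp_le_one_iff.mpr hz
      _ ≤ 2 * ‖z‖ := by linarith

lemma norm_exp_neg_mul_le {w : ℂ} {c τ : ℝ} (hw : c ≤ w.re) (hτ : 0 ≤ τ) :
    ‖exp (↑(-τ) * w)‖ ≤ Real.exp (-(c * τ)) := by
  rw [norm_exp, re_ofReal_mul, Real.exp_le_exp]
  nlinarith

lemma norm_exp_neg_mul_sub_le {w : ℂ} {M τ τ' : ℝ} (hw : 0 ≤ w.re) (hM : ‖w‖ ≤ M)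
    (hτ' : 0 ≤ τ') (hτ : τ' ≤ τ) :
    ‖exp (↑(-τ) * w) - exp (↑(-τ') * w)‖ ≤ 2 * M * (τ - τ') := by
  have hsplit : exp (↑(-τ) * w) - exp (↑(-τ') * w)
      = exp (↑(-τ') * w) * (exp (↑(-(τ - τ')) * w) - 1) := by
    rw [mul_sub, mul_one, ← exp_add]
    push_cast
    ring_nf
  have hsmall : ‖exp (↑(-(τ - τ')) * w) - 1‖ ≤ 2 * M * (τ - τ') := by
    refine (norm_exp_sub_one_le_of_re_nonpos ?_).trans ?_
    · rw [re_ofReal_mul]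
      nlinarith
    · rw [norm_mul, norm_real, Real.norm_eq_abs, abs_neg, abs_of_nonneg (by linarith)]
      nlinarith [norm_nonneg w]
  rw [hsplit, norm_mul]
  have h1 : ‖exp (↑(-τ') * w)‖ ≤ 1 := by
    simpa using norm_exp_neg_mul_le hw hτ'
  nlinarith [norm_nonneg (exp (↑(-(τ - τ')) * w) - 1), norm_nonneg (exp (↑(-τ') * w))]

end Complex

open Complex

section ExpFamily

variable {φ : ℂ → ℂ} {z₀ : ℂ} {R c M : ℝ}

lemma norm_iteratedDeriv_exp_neg_mul_le (hR : 0 < R)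
    (hφ : DifferentiableOn ℂ φ (closedBall z₀ R)) (hc : ∀ z ∈ closedBall z₀ R, c ≤ (φ z).re)
    (n : ℕ) {τ : ℝ} (hτ : 0 ≤ τ) :
    ‖iteratedDeriv n (fun z => exp (↑(-τ) * φ z)) z₀‖ ≤ n.factorial * Real.exp (-(c * τ)) / R ^ n :=
  norm_iteratedDeriv_le_of_forall_mem_sphere_norm_le n hR
    ((hφ.const_mul _).cexp.diffContOnCl_ball le_rfl)
    fun z hz => norm_exp_neg_mul_le (hc z (sphere_subset_closedBall hz)) hτ

lemma norm_iteratedDeriv_exp_neg_mul_sub_le (hR : 0 < R)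
    (hφ : DifferentiableOn ℂ φ (closedBall z₀ R)) (hre : ∀ z ∈ closedBall z₀ R, 0 ≤ (φ z).re)
    (hM : ∀ z ∈ closedBall z₀ R, ‖φ z‖ ≤ M) (n : ℕ) {τ τ' : ℝ} (hτ' : 0 ≤ τ') (hτ : τ' ≤ τ) :
    ‖iteratedDeriv n (fun z => exp (↑(-τ) * φ z)) z₀
        - iteratedDeriv n (fun z => exp (↑(-τ') * φ z)) z₀‖
      ≤ n.factorial * (2 * M * (τ - τ')) / R ^ n := by
  have hd : ∀ t : ℝ, DifferentiableOn ℂ (fun z => exp (↑t * φ z)) (closedBall z₀ R) :=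
    fun t => (hφ.const_mul _).cexp
  have hball : closedBall z₀ R ∈ 𝓝 z₀ := closedBall_mem_nhds z₀ hR
  rw [← iteratedDeriv_fun_sub ((hd _).analyticAt hball).contDiffAt
    ((hd _).analyticAt hball).contDiffAt]
  exact norm_iteratedDeriv_le_of_forall_mem_sphere_norm_le n hR
    (((hd _).sub (hd _)).diffContOnCl_ball le_rfl) fun z hz =>
      norm_exp_neg_mul_sub_le (hre z (sphere_subset_closedBall hz))
        (hM z (sphere_subset_closedBall hz)) hτ' hτ

lemma continuousOn_iteratedDeriv_exp_neg_mul (hR : 0 < R)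
    (hφ : DifferentiableOn ℂ φ (closedBall z₀ R)) (hre : ∀ z ∈ closedBall z₀ R, 0 ≤ (φ z).re)
    (hM : ∀ z ∈ closedBall z₀ R, ‖φ z‖ ≤ M) (n : ℕ) :
    ContinuousOn (fun τ : ℝ => iteratedDeriv n (fun z => exp (↑(-τ) * φ z)) z₀) (Ici 0) := by
  set L : ℝ := n.factorial * (2 * M) / R ^ n
  have hdist : ∀ τ ∈ Ici (0 : ℝ), ∀ τ' ∈ Ici (0 : ℝ), τ' ≤ τ →
      dist (iteratedDeriv n (fun z => exp (↑(-τ) * φ z)) z₀)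
        (iteratedDeriv n (fun z => exp (↑(-τ') * φ z)) z₀) ≤ L * dist τ τ' := by
    intro τ _ τ' hτ' hle
    rw [dist_eq_norm, Real.dist_eq, abs_of_nonneg (sub_nonneg.mpr hle)]
    convert norm_iteratedDeriv_exp_neg_mul_sub_le hR hφ hre hM n hτ' hle using 1
    ring
  refine (LipschitzOnWith.of_dist_le_mul fun τ hτ τ' hτ' => ?_).continuousOn (K := L.toNNReal)
  refine le_trans ?_ (mul_le_mul_of_nonneg_right (Real.le_coe_toNNReal L) dist_nonneg)
  rcases le_total τ' τ with h | h
  · exact hdist τ hτ τ' hτ' h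
  · rw [dist_comm, dist_comm τ]
    exact hdist τ' hτ' τ hτ h

lemma exists_norm_iteratedDeriv_exp_neg_mul_le (hR : 0 < R)
    (hφ : DifferentiableOn ℂ φ (closedBall z₀ R)) (hc : 0 ≤ c)
    (hre : ∀ z ∈ closedBall z₀ R, c ≤ (φ z).re) (hM : ∀ z ∈ closedBall z₀ R, ‖φ z‖ ≤ M)
    {n : ℕ} (hn : n ≠ 0) :
    ∃ C, ∀ τ : ℝ, 0 ≤ τ →
      ‖iteratedDeriv n (fun z => exp (↑(-τ) * φ z)) z₀‖ ≤ C * τ * Real.exp (-(c * τ)) := by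
  have hM0 : 0 ≤ M := (norm_nonneg _).trans (hM z₀ (mem_closedBall_self hR.le))
  have hzero : iteratedDeriv n (fun z => exp (↑(-(0 : ℝ)) * φ z)) z₀ = 0 := by
    simp [iteratedDeriv_const, hn]
  refine ⟨n.factorial * (2 * M) / R ^ n * Real.exp c + n.factorial / R ^ n, fun τ hτ => ?_⟩
  apply le_mul_mul_exp_of_le_of_le (by positivity) (by positivity) hc hτ
  · convert norm_iteratedDeriv_exp_neg_mul_le hR hφ hre n hτ using 1
    ring
  · have := norm_iteratedDeriv_exp_neg_mul_sub_le hR hφ (fun z hz => hc.trans (hre z hz)) hM n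
      le_rfl hτ
    rw [hzero, sub_zero, sub_zero] at this
    convert this using 1
    ring

end ExpFamily

lemma exists_closedBall_forall_le_re_and_norm_le {φ : ℂ → ℂ} {z₀ : ℂ} {U : Set ℂ}
    (hU : U ∈ 𝓝 z₀) (hφ : ContinuousAt φ z₀) (h0 : 0 < (φ z₀).re) :
    ∃ R > 0, ∃ c > 0, ∃ M, closedBall z₀ R ⊆ U ∧
      ∀ z ∈ closedBall z₀ R, c ≤ (φ z).re ∧ ‖φ z‖ ≤ M := by
  have hre : ∀ᶠ z in 𝓝 z₀, (φ z₀).re / 2 < (φ z).re :=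
    (continuous_re.continuousAt.comp hφ).eventually (eventually_gt_nhds (half_lt_self h0))
  have hnorm : ∀ᶠ z in 𝓝 z₀, ‖φ z‖ < ‖φ z₀‖ + 1 :=
    hφ.norm.eventually (eventually_lt_nhds (lt_add_one _))
  obtain ⟨R, hR, hball⟩ := nhds_basis_closedBall.eventually_iff.mp
    ((show ∀ᶠ z in 𝓝 z₀, z ∈ U from hU).and (hre.and hnorm))
  exact ⟨R, hR, _, half_pos h0, _, fun z hz => (hball hz).1,
    fun z hz => ⟨(hball hz).2.1.le, (hball hz).2.2.le⟩⟩

section Psi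

variable {p : ℝ} {lam : ℂ}

lemma re_cpow_one_div_pos (hp : 0 < p) (hlam : lam ≠ 0) (harg : |arg lam| < p * Real.pi / 2) :
    0 < (lam ^ (1 / (p : ℂ))).re := by
  have hcast : (1 / (p : ℂ)) = ((1 / p : ℝ) : ℂ) := by push_cast; rfl
  rw [hcast, cpow_ofReal_re]
  refine mul_pos (Real.rpow_pos_of_pos (norm_pos_iff.mpr hlam) _) (Real.cos_pos_of_mem_Ioo ?_)
  rw [mul_one_div, mem_Ioo, lt_div_iff₀ hp, div_lt_iff₀ hp]
  constructor <;> linarith [abs_lt.mp harg]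

lemma exists_closedBall_cpow_one_div (hp : 0 < p) (hlam : lam ∈ slitPlane)
    (harg : |arg lam| < p * Real.pi / 2) :
    ∃ R > 0, ∃ c > 0, ∃ M, DifferentiableOn ℂ (fun z => z ^ (1 / (p : ℂ))) (closedBall lam R) ∧
      ∀ z ∈ closedBall lam R, c ≤ (z ^ (1 / (p : ℂ))).re ∧ ‖z ^ (1 / (p : ℂ))‖ ≤ M := by
  obtain ⟨R, hR, c, hc, M, hsub, hball⟩ := exists_closedBall_forall_le_re_and_norm_le
    (isOpen_slitPlane.mem_nhds hlam) (continuousAt_cpow_const hlam)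
    (re_cpow_one_div_pos hp (slitPlane_ne_zero hlam) harg)
  exact ⟨R, hR, c, hc, M, fun z hz =>
    (differentiableAt_id.cpow_const (hsub hz)).differentiableWithinAt, hball⟩

lemma continuousOn_psiT_neg (hp : 0 < p) (hlam : lam ∈ slitPlane)
    (harg : |arg lam| < p * Real.pi / 2) (m : ℕ) :
    ContinuousOn (fun τ : ℝ => psiT p m (-τ) lam) (Ici 0) := by
  obtain ⟨R, hR, c, hc, M, hd, hball⟩ := exists_closedBall_cpow_one_div hp hlam harg
  exact continuousOn_const.mul <| continuousOn_iteratedDeriv_exp_neg_mul hR hd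
    (fun z hz => hc.le.trans (hball z hz).1) (fun z hz => (hball z hz).2) (m + 1)

lemma exists_norm_psiT_neg_le (hp : 0 < p) (hlam : lam ∈ slitPlane)
    (harg : |arg lam| < p * Real.pi / 2) (m : ℕ) :
    ∃ C, ∃ c > 0, ∀ τ : ℝ, 0 ≤ τ → ‖psiT p m (-τ) lam‖ ≤ C * τ * Real.exp (-(c * τ)) := by
  obtain ⟨R, hR, c, hc, M, hd, hball⟩ := exists_closedBall_cpow_one_div hp hlam harg
  obtain ⟨C, hC⟩ := exists_norm_iteratedDeriv_exp_neg_mul_le hR hd hc.le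
    (fun z hz => (hball z hz).1) (fun z hz => (hball z hz).2) m.succ_ne_zero
  refine ⟨‖1 / (m.factorial : ℂ)‖ * C, c, hc, fun τ hτ => ?_⟩
  rw [psiT, norm_mul, mul_assoc, mul_assoc]
  exact mul_le_mul_of_nonneg_left ((hC τ hτ).trans_eq (by ring)) (norm_nonneg _)

end Psi

lemma integrableOn_norm_div_of_le_mul_exp {E : Type*} [NormedAddCommGroup E] {f : ℝ → E}
    {C c : ℝ} (hf : ContinuousOn f (Ioi 0)) (hc : 0 < c)
    (hb : ∀ τ : ℝ, 0 < τ → ‖f τ‖ ≤ C * τ * Real.exp (-(c * τ))) :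
    IntegrableOn (fun τ => ‖f τ‖ / τ) (Ioi 0) := by
  refine Integrable.mono' ((exp_neg_integrableOn_Ioi 0 hc).const_mul C)
    ((hf.norm.div continuousOn_id fun τ hτ => hτ.ne').aestronglyMeasurable measurableSet_Ioi)
    ((ae_restrict_iff' measurableSet_Ioi).mpr (ae_of_all _ fun τ (hτ : 0 < τ) => ?_))
  rw [Real.norm_of_nonneg (by positivity), div_le_iff₀ hτ, neg_mul]
  linarith [hb τ hτ]

lemma EuclideanSpace.norm_le_sum_norm {𝕜 ι : Type*} [RCLike 𝕜] [Fintype ι]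
    (x : EuclideanSpace 𝕜 ι) :
    ‖x‖ ≤ ∑ i, ‖x i‖ := by
  rw [EuclideanSpace.norm_eq, Real.sqrt_le_left (by positivity)]
  exact Finset.sum_sq_le_sq_sum_of_nonneg fun i _ => norm_nonneg _

lemma mvE_apply {ι : Type*} [Fintype ι] [DecidableEq ι] (M : Matrix ι ι ℂ)
    (v : EuclideanSpace ℂ ι) (a : ι) : mvE M v a = ∑ b, M a b * v b := rfl

lemma norm_mvE_le {ι : Type*} [Fintype ι] [DecidableEq ι] (M : Matrix ι ι ℂ)
    (v : EuclideanSpace ℂ ι) : ‖mvE M v‖ ≤ (∑ a, ∑ b, ‖M a b‖) * ‖v‖ := by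
  calc ‖mvE M v‖ ≤ ∑ a, ‖mvE M v a‖ := EuclideanSpace.norm_le_sum_norm _
    _ ≤ ∑ a, ∑ b, ‖M a b‖ * ‖v‖ := by
      gcongr with a
      rw [mvE_apply]
      refine (norm_sum_le _ _).trans (Finset.sum_le_sum fun b _ => ?_)
      rw [norm_mul]
      gcongr
      exact PiLp.norm_apply_le v b
    _ = (∑ a, ∑ b, ‖M a b‖) * ‖v‖ := by simp only [Finset.sum_mul]

lemma continuous_mvE {ι : Type*} [Fintype ι] [DecidableEq ι] :
    Continuous fun q : Matrix ι ι ℂ × EuclideanSpace ℂ ι => mvE q.1 q.2 :=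
  (PiLp.continuous_toLp 2 _).comp
    (continuous_fst.matrix_mulVec ((PiLp.continuous_ofLp 2 _).comp continuous_snd))

lemma BC.norm_le_supNorm {E : Type*} [NormedAddCommGroup E] {x : ℝ → E} (hx : BC x) {t : ℝ}
    (ht : 0 ≤ t) : ‖x t‖ ≤ supNorm x := by
  obtain ⟨-, C, hC⟩ := hx
  exact le_ciSup (f := fun t : Ici (0 : ℝ) => ‖x t‖) ⟨C, by rintro _ ⟨u, rfl⟩; exact hC u u.2⟩
    ⟨t, ht⟩

lemma supNorm_nonneg {E : Type*} [NormedAddCommGroup E] (x : ℝ → E) : 0 ≤ supNorm x :=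
  Real.iSup_nonneg fun _ => norm_nonneg _

namespace JordanSetting

variable (S : JordanSetting)

lemma eig_mem_slitPlane {j : Fin S.l} (hj : S.s ≤ j) : S.eig j ∈ slitPlane := by
  refine mem_slitPlane_iff_arg.mpr ⟨fun h => ?_, S.heig j⟩
  have := S.hunstable j hj
  rw [h, abs_of_pos Real.pi_pos] at this
  nlinarith [S.hp1, Real.pi_pos]

lemma Bt_apply_eq_zero_or_psiT (a b : S.ix) :
    (∀ t, S.Bt t a b = 0) ∨
      ∃ j : Fin S.l, ∃ m : ℕ, S.s ≤ j ∧ ∀ t, S.Bt t a b = psiT S.p m t (S.eig j) := by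
  obtain ⟨j, i⟩ := a
  obtain ⟨j', i'⟩ := b
  by_cases hj : j = j'
  · subst hj
    by_cases hs : (j : ℕ) < S.s
    · exact .inl fun t => by simp [Bt, hs]
    by_cases hi : i ≤ i'
    · exact .inr ⟨j, i' - i, not_lt.mp hs, fun t => by simp [Bt, BTMat, hs, hi]⟩
    · exact .inl fun t => by simp [Bt, BTMat, hs, hi]
  · exact .inl fun t => Matrix.blockDiagonal'_apply_ne _ _ _ hj

lemma continuousOn_Bt_neg_apply (a b : S.ix) :
    ContinuousOn (fun τ : ℝ => S.Bt (-τ) a b) (Ici 0) := by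
  rcases S.Bt_apply_eq_zero_or_psiT a b with h | ⟨j, m, hj, h⟩
  · simp only [h]
    exact continuousOn_const
  · simp only [h]
    exact continuousOn_psiT_neg S.hp0 (S.eig_mem_slitPlane hj) (S.hunstable j hj) m

lemma integrableOn_norm_Bt_neg_apply_div (a b : S.ix) :
    IntegrableOn (fun τ : ℝ => ‖S.Bt (-τ) a b‖ / τ) (Ioi 0) := by
  rcases S.Bt_apply_eq_zero_or_psiT a b with h | ⟨j, m, hj, h⟩
  · simp only [h, norm_zero, zero_div]
    exact integrableOn_zero
  · obtain ⟨C, c, hc, hC⟩ :=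
      exists_norm_psiT_neg_le S.hp0 (S.eig_mem_slitPlane hj) (S.hunstable j hj) m
    refine integrableOn_norm_div_of_le_mul_exp (C := C)
      ((S.continuousOn_Bt_neg_apply a b).mono Ioi_subset_Ici_self) hc fun τ hτ => ?_
    rw [h]
    exact hC τ hτ.le

lemma norm_piu_le (v : ES S) : ‖S.piu v‖ ≤ ‖v‖ := by
  rw [EuclideanSpace.norm_eq, EuclideanSpace.norm_eq]
  gcongr with a
  change ‖if S.s ≤ (a.1 : ℕ) then v a else 0‖ ≤ ‖v a‖
  split_ifs <;> simp

lemma continuous_piu : Continuous S.piu :=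
  (PiLp.continuous_toLp 2 _).comp <| continuous_pi fun a => by
    split_ifs
    · exact (continuous_apply a).comp (PiLp.continuous_ofLp 2 _)
    · exact continuous_const

lemma continuousOn_integrand {g : ℝ → ES S} (hg : ContinuousOn g (Ici 0)) :
    ContinuousOn (fun τ : ℝ => (S.p / τ) • mvE (S.Bt (-τ)) (S.piu (g τ))) (Ioi 0) :=
  (continuousOn_const.div continuousOn_id fun _ hτ => ne_of_gt hτ).smul <|
    (continuous_mvE.comp_continuousOn <|
      (continuousOn_pi.2 fun a => continuousOn_pi.2 fun b => S.continuousOn_Bt_neg_apply a b).prodMk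
        (S.continuous_piu.comp_continuousOn hg)).mono Ioi_subset_Ici_self

noncomputable def BtWeight (τ : ℝ) : ℝ := ∑ a, ∑ b, ‖S.Bt (-τ) a b‖ / τ

lemma integrableOn_BtWeight : IntegrableOn S.BtWeight (Ioi 0) :=
  integrable_finsetSum _ fun a _ => integrable_finsetSum _ fun b _ =>
    S.integrableOn_norm_Bt_neg_apply_div a b

lemma norm_integrand_le {τ r : ℝ} (hτ : 0 < τ) {v : ES S} (hv : ‖v‖ ≤ r) :
    ‖(S.p / τ) • mvE (S.Bt (-τ)) (S.piu v)‖ ≤ S.p * r * S.BtWeight τ := by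
  -- as a plain function, `S.Bt (-τ)` can be rewritten under the sums
  set e : S.ix → S.ix → ℂ := S.Bt (-τ)
  have hp := S.hp0
  have hr : 0 ≤ r := (norm_nonneg v).trans hv
  rw [norm_smul, Real.norm_of_nonneg (by positivity)]
  calc S.p / τ * ‖mvE e (S.piu v)‖ ≤ S.p / τ * ((∑ a, ∑ b, ‖e a b‖) * r) := by
        gcongr
        exact (norm_mvE_le _ _).trans (by gcongr; exact (S.norm_piu_le v).trans hv)
    _ = S.p * r * ∑ a, ∑ b, ‖e a b‖ / τ := by
        simp only [← Finset.sum_div]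
        ring

end JordanSetting

theorem stmt_7 (S : JordanSetting) :
    ∃ K > (0 : ℝ), ∀ g : ℝ → ES S, BC g →
      MeasureTheory.IntegrableOn
          (fun τ : ℝ => (S.p / τ) • mvE (S.Bt (-τ)) (S.piu (g τ))) (Set.Ioi 0) ∧
        ‖∫ τ in Set.Ioi (0 : ℝ), (S.p / τ) • mvE (S.Bt (-τ)) (S.piu (g τ))‖
          ≤ K * supNorm g := by
  set I : ℝ := ∫ τ in Ioi 0, S.BtWeight τ
  have hp := S.hp0
  have hI : 0 ≤ I := setIntegral_nonneg measurableSet_Ioi fun τ hτ =>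
    Finset.sum_nonneg fun a _ => Finset.sum_nonneg fun b _ => by have : 0 < τ := hτ; positivity
  refine ⟨S.p * I + 1, by positivity, fun g hg => ?_⟩
  have hdom := S.integrableOn_BtWeight.const_mul (S.p * supNorm g)
  have hle : ∀ᵐ τ ∂volume.restrict (Ioi 0),
      ‖(S.p / τ) • mvE (S.Bt (-τ)) (S.piu (g τ))‖ ≤ S.p * supNorm g * S.BtWeight τ :=
    (ae_restrict_iff' measurableSet_Ioi).mpr <| ae_of_all _ fun τ hτ =>
      S.norm_integrand_le hτ (hg.norm_le_supNorm (le_of_lt hτ))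
  refine ⟨hdom.mono' ((S.continuousOn_integrand hg.1).aestronglyMeasurable measurableSet_Ioi) hle,
    ?_⟩
  calc _ ≤ ∫ τ in Ioi 0, S.p * supNorm g * S.BtWeight τ := norm_integral_le_of_norm_le hdom hle
    _ = S.p * I * supNorm g := by rw [integral_const_mul]; ring
    _ ≤ (S.p * I + 1) * supNorm g := by nlinarith [supNorm_nonneg g]
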